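/- Runtime confounding counterexample structure: there exists a discrete probability space with random variables H₁, A₁, X₂, A₂, Y (all taking finitely many values) satisfying positivity of the propensities P(A₁ = a₁ | H₁) and P(A₂ = a₂ | H₁, A₁, X₂), such that E[ E[ Y | H₁, A₁ = a₁, X₂, A₂ = a₂ ] | H₁ = h₁, A₁ = a₁ ] ≠ E[ Y | H₁ = h₁, A₁ = a₁, A₂ = a₂ ] for some h₁ in the support of H₁. -/

import Mathlib

/-!
Take `Ω = Fin 3` with the uniform measure, `H₁` and `A₁` constant, the confounder
`X₂ = [ω = 0]`, the treatment `A₂ = [ω ≠ 2]` and the outcome `Y = X₂`. Since `X₂` drives both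
treatment and outcome, it is over-represented among the treated: the naive estimand is
`E[Y | A₂] = P(X₂ | A₂) = 1/2`, whereas G-computation averages `E[Y | X₂, A₂] = X₂` over the
marginal law of `X₂` and gives `1/3`. On a finite uniform space conditional expectations are
averages over finite sets and positivity of a conditional probability is nonemptiness of an
intersection, so everything reduces to counting.
-/

open MeasureTheory ProbabilityTheory Finset

namespace ProbabilityTheory

variable {Ω : Type*} [Finite Ω] [MeasurableSpace Ω] [MeasurableSingletonClass Ω]

lemma cond_uniformOn_univ (s : Set Ω) :
    (uniformOn Set.univ : Measure Ω)[|s] = uniformOn s := by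
  rw [uniformOn, cond_cond_eq_cond_inter' .univ s.toFinite.measurableSet
    (Measure.count_apply_lt_top.2 Set.finite_univ).ne, Set.univ_inter, uniformOn]

lemma uniformOn_pos_iff {s t : Set Ω} : 0 < uniformOn s t ↔ (s ∩ t).Nonempty := by
  rw [pos_iff_ne_zero, Ne, uniformOn_eq_zero_iff s.toFinite, Set.nonempty_iff_ne_empty]

lemma uniformOn_univ_pos_iff {s : Set Ω} : 0 < uniformOn Set.univ s ↔ s.Nonempty := by
  rw [uniformOn_pos_iff, Set.univ_inter]

lemma cond_uniformOn_univ_pos_iff {s t : Set Ω} :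
    0 < (uniformOn Set.univ : Measure Ω)[|s] t ↔ (s ∩ t).Nonempty := by
  rw [cond_uniformOn_univ, uniformOn_pos_iff]

lemma integral_uniformOn_finset (s : Finset Ω) (f : Ω → ℝ) :
    ∫ x, f x ∂uniformOn (s : Set Ω) = (∑ x ∈ s, f x) / #s := by
  rw [uniformOn, cond, integral_smul_measure, setIntegral_finset _ .finset]
  simp [div_eq_inv_mul]

end ProbabilityTheory

/-- Runtime confounding counterexample structure: there exists a finite
probability space with variables `H₁, A₁, X₂, A₂, Y` satisfying positivity of
both propensity scores such that the iterated G-computation formula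
`E[ E[ Y | H₁, A₁ = a₁, X₂, A₂ = a₂ ] | H₁ = h₁, A₁ = a₁ ]` differs from the
naive history-adjusted quantity `E[ Y | H₁ = h₁, A₁ = a₁, A₂ = a₂ ]`. -/
theorem runtime_confounding_counterexample :
    ∃ (Ω : Type) (_ : Fintype Ω) (_ : MeasurableSpace Ω) (μ : Measure Ω)
      (_ : IsProbabilityMeasure μ)
      (H₁ : Ω → Bool) (A₁ : Ω → Bool) (X₂ : Ω → Bool) (A₂ : Ω → Bool)
      (Y : Ω → ℝ) (a₁ a₂ : Bool) (h₁ : Bool),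
      -- h₁ in the support and positivity of the first propensity:
      μ {ω | H₁ ω = h₁ ∧ A₁ ω = a₁} > 0 ∧
      (∀ h : Bool, μ (H₁ ⁻¹' {h}) > 0 →
        (μ[|H₁ ⁻¹' {h}]) (A₁ ⁻¹' {a₁}) > 0) ∧
      -- positivity of the second propensity given (H₁, A₁, X₂):
      (∀ h a x : Bool, μ {ω | H₁ ω = h ∧ A₁ ω = a ∧ X₂ ω = x} > 0 →
        (μ[|{ω | H₁ ω = h ∧ A₁ ω = a ∧ X₂ ω = x}]) (A₂ ⁻¹' {a₂}) > 0) ∧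
      -- iterated G-computation ≠ naive history adjustment:
      (∫ ω, (∫ ω', Y ω'
            ∂(μ[|{ω'' | H₁ ω'' = h₁ ∧ A₁ ω'' = a₁ ∧ X₂ ω'' = X₂ ω ∧ A₂ ω'' = a₂}]))
          ∂(μ[|{ω | H₁ ω = h₁ ∧ A₁ ω = a₁}]))
        ≠ ∫ ω, Y ω ∂(μ[|{ω | H₁ ω = h₁ ∧ A₁ ω = a₁ ∧ A₂ ω = a₂}]) := by
  refine ⟨Fin 3, inferInstance, inferInstance, uniformOn Set.univ, inferInstance,
    fun _ => true, fun _ => true, fun ω => ω = 0, fun ω => ω ≠ 2,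
    fun ω => if ω = 0 then 1 else 0, true, true, true, by simp, ?overlap₁, ?overlap₂, ?_⟩
  case overlap₁ | overlap₂ =>
    simp only [gt_iff_lt, uniformOn_univ_pos_iff, cond_uniformOn_univ_pos_iff, Set.Nonempty,
      Set.mem_inter_iff, Set.mem_preimage, Set.mem_singleton_iff]
    decide
  simp only [and_true, true_and, Set.ofPred_true, cond_univ, cond_uniformOn_univ]
  simp only [← coe_filter_univ, ← coe_univ, integral_uniformOn_finset]
  simp [Fin.sum_univ_three, show #{x : Fin 3 | x = 0 ∧ ¬x = 2} = 1 by decide,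
    show #{x : Fin 3 | ¬x = 2} = 2 by decide]
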